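/- (Spherical Jung-type bound for almost smooth bodies) Let M ⊂ ℝ^d, d ≥ 3, be a convex body such that for every boundary point b and any two outer unit normals n_i, n_j at b one has n_i · n_j ≥ (d−2)/(d−1). Then for every face F of M, the Gauss image ν(F) is contained in a closed spherical cap of angular radius arccos(√((d−1)/d)). -/

import Mathlib

open scoped RealInnerProductSpace

def IsFaceOf {d : ℕ} (K F : Set (EuclideanSpace ℝ (Fin d))) : Prop :=
  ∃ (n : EuclideanSpace ℝ (Fin d)) (c : ℝ), n ≠ 0 ∧ (∀ x ∈ K, ⟪n, x⟫ ≤ c) ∧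
    (∃ x ∈ K, ⟪n, x⟫ = c) ∧ F = {x ∈ K | ⟪n, x⟫ = c}

def gaussImage {d : ℕ} (K F : Set (EuclideanSpace ℝ (Fin d))) :
    Set (EuclideanSpace ℝ (Fin d)) :=
  {n | ‖n‖ = 1 ∧ ∃ c : ℝ, (∀ x ∈ K, ⟪n, x⟫ ≤ c) ∧ ∀ y ∈ F, ⟪n, y⟫ = c}

/-- `n` is an outer unit normal of a supporting hyperplane of `M` at `b`. -/
def IsOuterUnitNormalAt {d : ℕ} (M : Set (EuclideanSpace ℝ (Fin d)))
    (b n : EuclideanSpace ℝ (Fin d)) : Prop :=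
  ‖n‖ = 1 ∧ ∀ x ∈ M, ⟪n, x⟫ ≤ ⟪n, b⟫

/-!
All unit normals in the Gauss image of a face support `M` at one common boundary point of the
face, so by hypothesis they form a set `A` of unit vectors with pairwise inner products at least
`α = (d - 2) / (d - 1)`. Let `p` be the point of least norm in the convex hull of (the closure of)
`A`; then `‖p‖² ≤ ⟪p, n⟫` for all `n ∈ A`. By Carathéodory, `p = ∑ wᵢ zᵢ` is a positive convex
combination of affinely independent `zᵢ ∈ A`, which must all lie on the hyperplane
`⟪p, ·⟫ = ‖p‖²`; hence there are at most `d` of them. Expanding the Gram sum,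
`‖p‖² ≥ α + (1 - α) ∑ wᵢ² ≥ α + (1 - α) / d = (d - 1) / d`, and `p / ‖p‖` is the centre of the cap.
-/

open Set Module

section ConvexHull

variable {E : Type*} [NormedAddCommGroup E] [NormedSpace ℝ E]

theorem convexHull_range_eq_image_stdSimplex {ι : Type*} [Fintype ι] (g : ι → E) :
    convexHull ℝ (range g) = (fun w : ι → ℝ => ∑ i, w i • g i) '' stdSimplex ℝ ι := by
  classical
  have h := (Fintype.linearCombination ℝ g).image_convexHull (range fun i : ι ↦ Pi.single i 1)
  rw [convexHull_rangle_single_eq_stdSimplex, ← range_comp] at h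
  simp only [Function.comp_def, Fintype.linearCombination_apply_single, one_smul] at h
  rw [← h]
  rfl

theorem IsCompact.convexHull [FiniteDimensional ℝ E] {s : Set E} (hs : IsCompact s) :
    IsCompact (_root_.convexHull ℝ s) := by
  set N := finrank ℝ E + 1
  have hhull : _root_.convexHull ℝ s =
      (fun q : (Fin N → ℝ) × (Fin N → E) => ∑ j, q.1 j • q.2 j) ''
        (stdSimplex ℝ (Fin N) ×ˢ univ.pi fun _ => s) := by
    refine Subset.antisymm (fun x hx => ?_) ?_
    · rw [convexHull_eq_union] at hx
      simp only [mem_iUnion] at hx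
      obtain ⟨t, hts, ht, hxt⟩ := hx
      have : Nonempty t := (convexHull_nonempty_iff.1 ⟨x, hxt⟩).to_subtype
      have hcard : Fintype.card t ≤ Fintype.card (Fin N) := by
        simpa [N] using
          ht.card_le_finrank_succ.trans (Nat.add_le_add_right (Submodule.finrank_le _) 1)
      obtain ⟨e⟩ := Function.Embedding.nonempty_of_card_le hcard
      set g : Fin N → E := Subtype.val ∘ Function.invFun e
      have hg : range g = t := by
        rw [range_comp, (Function.invFun_surjective e.injective).range_eq, image_univ,
          Subtype.range_coe]
      rw [← hg, convexHull_range_eq_image_stdSimplex] at hxt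
      obtain ⟨w, hw, rfl⟩ := hxt
      exact ⟨(w, g), ⟨hw, fun j _ => hts (Function.invFun e j).2⟩, rfl⟩
    · rintro _ ⟨⟨w, g⟩, ⟨hw, hg⟩, rfl⟩
      refine convexHull_mono (range_subset_iff.2 fun j => hg j trivial) ?_
      rw [convexHull_range_eq_image_stdSimplex]
      exact ⟨w, hw, rfl⟩
  rw [hhull]
  exact ((isCompact_stdSimplex ℝ _).prod (isCompact_univ_pi fun _ => hs)).image (by fun_prop)

end ConvexHull

section InnerProduct

variable {E : Type*} [NormedAddCommGroup E] [InnerProductSpace ℝ E]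

theorem sq_norm_le_inner_of_isMinOn_norm {K : Set E} {p x : E} (hK : Convex ℝ K) (hp : p ∈ K)
    (hmin : IsMinOn (‖·‖) K p) (hx : x ∈ K) : ‖p‖ ^ 2 ≤ ⟪p, x⟫ := by
  have hinf : ‖0 - p‖ = ⨅ q : K, ‖0 - (q : E)‖ := by
    have : Nonempty K := ⟨⟨p, hp⟩⟩
    have hbdd : BddBelow (range fun q : K => ‖0 - (q : E)‖) :=
      ⟨0, forall_mem_range.2 fun _ => norm_nonneg _⟩
    exact le_antisymm (le_ciInf fun q => by simpa using hmin q.2) (ciInf_le hbdd ⟨p, hp⟩)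
  have h := (norm_eq_iInf_iff_real_inner_le_zero hK hp).1 hinf x hx
  rw [zero_sub, inner_neg_left, inner_sub_right, real_inner_self_eq_norm_sq] at h
  linarith

theorem add_mul_sum_sq_le_norm_sum_smul_sq {ι : Type*} [Fintype ι] {α : ℝ} {w : ι → ℝ}
    {z : ι → E}
    (hw₀ : ∀ i, 0 ≤ w i) (hw₁ : ∑ i, w i = 1) (hz : ∀ i, ‖z i‖ = 1)
    (hα : ∀ i j, α ≤ ⟪z i, z j⟫) :
    α + (1 - α) * ∑ i, w i ^ 2 ≤ ‖∑ i, w i • z i‖ ^ 2 := by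
  have hgram : ‖∑ i, w i • z i‖ ^ 2 - α = ∑ i, ∑ j, w i * w j * (⟪z i, z j⟫ - α) := by
    have hnorm : ‖∑ i, w i • z i‖ ^ 2 = ∑ i, ∑ j, w i * w j * ⟪z i, z j⟫ := by
      rw [← real_inner_self_eq_norm_sq, sum_inner]
      refine Finset.sum_congr rfl fun i _ => ?_
      rw [real_inner_smul_left, inner_sum, Finset.mul_sum]
      refine Finset.sum_congr rfl fun j _ => ?_
      rw [real_inner_smul_right, mul_assoc]
    have hww : ∑ i, ∑ j, w i * w j = 1 := by rw [← Finset.sum_mul_sum, hw₁, one_mul]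
    simp only [hnorm, mul_sub, Finset.sum_sub_distrib, ← Finset.sum_mul, hww, one_mul]
  have hdiag : ∀ i, w i ^ 2 * (1 - α) ≤ ∑ j, w i * w j * (⟪z i, z j⟫ - α) := fun i => by
    have := Finset.single_le_sum (f := fun j => w i * w j * (⟪z i, z j⟫ - α))
      (fun j _ => mul_nonneg (mul_nonneg (hw₀ i) (hw₀ j)) (sub_nonneg.2 (hα i j)))
      (Finset.mem_univ i)
    rwa [real_inner_self_eq_norm_sq, hz, ← sq, one_pow] at this
  have := Finset.sum_le_sum fun i (_ : i ∈ Finset.univ) => hdiag i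
  rw [← Finset.sum_mul] at this
  linarith

theorem AffineIndependent.card_le_finrank_of_inner_eq [FiniteDimensional ℝ E] {ι : Type*}
    [Fintype ι] {z : ι → E} (hz : AffineIndependent ℝ z) {p : E} {r : ℝ} (hp : p ≠ 0)
    (h : ∀ i, ⟪p, z i⟫ = r) : Fintype.card ι ≤ finrank ℝ E := by
  set H := LinearMap.ker (innerₛₗ ℝ p)
  have hspan : vectorSpan ℝ (range z) ≤ H := by
    rw [vectorSpan_def, Submodule.span_le]
    rintro _ ⟨_, ⟨i, rfl⟩, _, ⟨j, rfl⟩, rfl⟩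
    simp [H, inner_sub_right, h]
  have hH : H ≠ ⊤ := fun htop => hp <| by
    have : p ∈ H := htop ▸ Submodule.mem_top
    simpa [H] using this
  have := Submodule.finrank_lt hH
  have := Submodule.finrank_mono hspan
  have := hz.card_le_finrank_succ
  omega

theorem add_div_finrank_le_sq_norm_of_isMinOn [FiniteDimensional ℝ E] {A : Set E} {α : ℝ}
    (hα₀ : 0 ≤ α) (hα₁ : α ≤ 1) (hA : ∀ n ∈ A, ‖n‖ = 1) (hAα : ∀ n ∈ A, ∀ m ∈ A, α ≤ ⟪n, m⟫)
    {p : E} (hp : p ∈ convexHull ℝ A) (hmin : IsMinOn (‖·‖) (convexHull ℝ A) p) :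
    α + (1 - α) / finrank ℝ E ≤ ‖p‖ ^ 2 := by
  have hsupp : ∀ x ∈ A, ‖p‖ ^ 2 ≤ ⟪p, x⟫ := fun x hx =>
    sq_norm_le_inner_of_isMinOn_norm (convex_convexHull ℝ A) hp hmin (subset_convexHull ℝ A hx)
  obtain ⟨ι, _, z, w, hzA, hz, hw₀, hw₁, rfl⟩ := eq_pos_convex_span_of_mem_convexHull hp
  have hzA' : ∀ i, z i ∈ A := fun i => hzA (mem_range_self i)
  set p := ∑ i, w i • z i
  set s := ∑ i, w i ^ 2
  have hgram : α + (1 - α) * s ≤ ‖p‖ ^ 2 :=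
    add_mul_sum_sq_le_norm_sum_smul_sq (fun i => (hw₀ i).le) hw₁ (fun i => hA _ (hzA' i))
      fun i j => hAα _ (hzA' i) _ (hzA' j)
  have hcs : 1 ≤ Fintype.card ι * s := by
    simpa [hw₁] using sq_sum_le_card_mul_sum_sq (s := Finset.univ) (f := w)
  have hs : 0 < s := pos_of_mul_pos_right (one_pos.trans_le hcs) (Nat.cast_nonneg _)
  have hp0 : p ≠ 0 := by
    have : 0 < α + (1 - α) * s := by
      rcases hα₀.eq_or_lt with rfl | hα
      · simpa using hs
      · nlinarith [mul_nonneg (sub_nonneg.2 hα₁) hs.le]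
    rintro h
    rw [h, norm_zero] at hgram
    linarith
  -- `p` is a positive combination of the `z i`, so they all lie on the supporting hyperplane.
  have hon : ∀ i, ⟪p, z i⟫ = ‖p‖ ^ 2 := by
    have hsum : ∑ i, w i * (⟪p, z i⟫ - ‖p‖ ^ 2) = 0 := by
      simp only [mul_sub, Finset.sum_sub_distrib, ← Finset.sum_mul, hw₁, one_mul,
        ← real_inner_smul_right, ← inner_sum]
      exact sub_eq_zero.2 (real_inner_self_eq_norm_sq p)
    intro i
    have := (Finset.sum_eq_zero_iff_of_nonneg fun i _ =>
      mul_nonneg (hw₀ i).le (sub_nonneg.2 (hsupp _ (hzA' i)))).1 hsum i (Finset.mem_univ i)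
    linarith [(mul_eq_zero.1 this).resolve_left (hw₀ i).ne']
  have hcard : (Fintype.card ι : ℝ) ≤ finrank ℝ E := by
    exact_mod_cast hz.card_le_finrank_of_inner_eq hp0 hon
  have hds : 1 ≤ finrank ℝ E * s := hcs.trans (mul_le_mul_of_nonneg_right hcard hs.le)
  have : (1 - α) / finrank ℝ E ≤ (1 - α) * s := by
    rw [div_le_iff₀ (pos_of_mul_pos_left (one_pos.trans_le hds) hs.le)]
    nlinarith [mul_nonneg (sub_nonneg.2 hα₁) (sub_nonneg.2 hds)]
  linarith

theorem exists_norm_eq_one_forall_sqrt_le_inner [FiniteDimensional ℝ E] [Nontrivial E]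
    {A : Set E} {α : ℝ} (hα₀ : 0 ≤ α) (hα₁ : α ≤ 1) (hA : ∀ n ∈ A, ‖n‖ = 1)
    (hAα : ∀ n ∈ A, ∀ m ∈ A, α ≤ ⟪n, m⟫) :
    ∃ c : E, ‖c‖ = 1 ∧ ∀ n ∈ A, √(α + (1 - α) / finrank ℝ E) ≤ ⟪c, n⟫ := by
  rcases A.eq_empty_or_nonempty with rfl | hne
  · obtain ⟨c, hc⟩ := exists_norm_eq E zero_le_one
    exact ⟨c, hc, by simp⟩
  have hB : ∀ n ∈ closure A, ‖n‖ = 1 :=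
    closure_minimal hA (isClosed_eq continuous_norm continuous_const)
  have hBα : ∀ n ∈ closure A, ∀ m ∈ closure A, α ≤ ⟪n, m⟫ := fun n hn m hm => by
    simpa using map_mem_closure₂ (u := Ici α) continuous_inner hn hm hAα
  have hBc : IsCompact (closure A) :=
    (isCompact_sphere 0 1).of_isClosed_subset isClosed_closure fun n hn =>
      mem_sphere_zero_iff_norm.2 (hB n hn)
  obtain ⟨p, hp, hmin⟩ := hBc.convexHull.exists_isMinOn
    (hne.closure.mono (subset_convexHull ℝ _)) continuous_norm.continuousOn
  have hbound := add_div_finrank_le_sq_norm_of_isMinOn hα₀ hα₁ hB hBα hp hmin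
  have hd : (1 : ℝ) ≤ finrank ℝ E := by exact_mod_cast finrank_pos
  have hpos : 0 < α + (1 - α) / finrank ℝ E := calc
    0 < 1 / (finrank ℝ E : ℝ) := by positivity
    _ = α / finrank ℝ E + (1 - α) / finrank ℝ E := by ring
    _ ≤ α + (1 - α) / finrank ℝ E := by gcongr; exact div_le_self hα₀ hd
  have hp0 : 0 < ‖p‖ := by nlinarith [norm_nonneg p]
  refine ⟨‖p‖⁻¹ • p, norm_smul_inv_norm (norm_pos_iff.1 hp0), fun n hn => ?_⟩
  have hpn := sq_norm_le_inner_of_isMinOn_norm (convex_convexHull ℝ _) hp hmin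
    (subset_convexHull ℝ _ (subset_closure hn))
  calc √(α + (1 - α) / finrank ℝ E) ≤ ‖p‖ := (Real.sqrt_le_left hp0.le).2 hbound
    _ ≤ ⟪‖p‖⁻¹ • p, n⟫ := by
      rwa [real_inner_smul_left, inv_mul_eq_div, le_div_iff₀ hp0, ← sq]

end InnerProduct

theorem notMem_interior_of_isMaxOn_inner {E : Type*} [NormedAddCommGroup E]
    [InnerProductSpace ℝ E] {s : Set E} {n b : E} (hn : n ≠ 0)
    (h : IsMaxOn (⟪n, ·⟫) s b) : b ∉ interior s := fun hb => by
  have hderiv := (h.isLocalMax (mem_interior_iff_mem_nhds.1 hb)).hasFDerivAt_eq_zero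
    (innerSL ℝ n).hasFDerivAt
  exact hn (by simpa using congr($hderiv n))

theorem IsFaceOf.exists_mem_frontier {d : ℕ} {K F : Set (EuclideanSpace ℝ (Fin d))}
    (hF : IsFaceOf K F) : ∃ b ∈ F, b ∈ frontier K := by
  obtain ⟨n, c, hn, hle, ⟨b, hbK, hbc⟩, rfl⟩ := hF
  exact ⟨b, ⟨hbK, hbc⟩, subset_closure hbK,
    notMem_interior_of_isMaxOn_inner hn (isMaxOn_iff.2 fun x hx => hbc ▸ hle x hx)⟩

theorem isOuterUnitNormalAt_of_mem_gaussImage {d : ℕ} {K F : Set (EuclideanSpace ℝ (Fin d))}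
    {b n : EuclideanSpace ℝ (Fin d)} (hb : b ∈ F) (hn : n ∈ gaussImage K F) :
    IsOuterUnitNormalAt K b n := by
  obtain ⟨hn₁, c, hle, heq⟩ := hn
  exact ⟨hn₁, fun x hx => heq b hb ▸ hle x hx⟩

theorem gauss_image_in_cap_of_almost_smooth_general {d : ℕ} (hd : 3 ≤ d)
    (M : Set (EuclideanSpace ℝ (Fin d)))
    (hAS : ∀ b ∈ frontier M, ∀ ni nj : EuclideanSpace ℝ (Fin d),
      IsOuterUnitNormalAt M b ni → IsOuterUnitNormalAt M b nj →
      ((d : ℝ) - 2) / ((d : ℝ) - 1) ≤ ⟪ni, nj⟫)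
    (F : Set (EuclideanSpace ℝ (Fin d))) (hF : IsFaceOf M F) :
    ∃ c : EuclideanSpace ℝ (Fin d), ‖c‖ = 1 ∧
      ∀ n ∈ gaussImage M F, Real.sqrt (((d : ℝ) - 1) / d) ≤ ⟪c, n⟫ := by
  obtain ⟨b, hbF, hb⟩ := hF.exists_mem_frontier
  have : Nontrivial (EuclideanSpace ℝ (Fin d)) :=
    Module.nontrivial_of_finrank_pos (R := ℝ) (by rw [finrank_euclideanSpace_fin]; omega)
  have hd' : (3 : ℝ) ≤ d := by exact_mod_cast hd
  obtain ⟨c, hc, hcap⟩ := exists_norm_eq_one_forall_sqrt_le_inner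
    (div_nonneg (by linarith) (by linarith)) ((div_le_one (by linarith)).2 (by linarith))
    (fun n hn => hn.1) fun ni hi nj hj => hAS b hb ni nj
      (isOuterUnitNormalAt_of_mem_gaussImage hbF hi) (isOuterUnitNormalAt_of_mem_gaussImage hbF hj)
  have hd1 : (d : ℝ) - 1 ≠ 0 := by linarith
  have hα : ((d : ℝ) - 2) / ((d : ℝ) - 1) + (1 - ((d : ℝ) - 2) / ((d : ℝ) - 1)) / d
      = ((d : ℝ) - 1) / d := by
    field_simp
    ring
  rw [finrank_euclideanSpace_fin, hα] at hcap
  exact ⟨c, hc, hcap⟩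

theorem gauss_image_in_cap_of_almost_smooth {d : ℕ} (hd : 3 ≤ d)
    (M : Set (EuclideanSpace ℝ (Fin d)))
    (hMc : IsCompact M) (hMconv : Convex ℝ M) (hMint : (interior M).Nonempty)
    (hAS : ∀ b ∈ frontier M, ∀ ni nj : EuclideanSpace ℝ (Fin d),
      IsOuterUnitNormalAt M b ni → IsOuterUnitNormalAt M b nj →
      ((d : ℝ) - 2) / ((d : ℝ) - 1) ≤ ⟪ni, nj⟫)
    (F : Set (EuclideanSpace ℝ (Fin d))) (hF : IsFaceOf M F) :
    ∃ c : EuclideanSpace ℝ (Fin d), ‖c‖ = 1 ∧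
      ∀ n ∈ gaussImage M F, Real.sqrt (((d : ℝ) - 1) / d) ≤ ⟪c, n⟫ :=
  gauss_image_in_cap_of_almost_smooth_general hd M hAS F hF
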